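/- Let L be the 3-dimensional Lie algebra with [e₁,e₂] = b e₃, [e₂,e₃] = c e₁, [e₁,e₃] = f e₂, and let r = r¹²e₁∧e₂ + r¹³e₁∧e₃ + r²³e₂∧e₃. Then the Schouten bracket satisfies [r,r]ₛ = (b(r¹²)² − f(r¹³)² + c(r²³)²)·e₁∧e₂∧e₃. -/
import Mathlib


noncomputable section

/-- `e i` is the `i`-th standard basis vector (also used for the dual basis `eⁱ`). -/
def e (i : Fin 3) : Fin 3 → ℂ := fun j => if j = i then 1 else 0

/-- Bilinear bracket determined by structure constants `c`: `[e i, e j] = ∑ k, c i j k • e k`. -/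
def bra (c : Fin 3 → Fin 3 → Fin 3 → ℂ) (x y : Fin 3 → ℂ) : Fin 3 → ℂ :=
  fun k => ∑ i, ∑ j, x i * y j * c i j k

/-- Coordinates of the cobracket `δ(x) = [x⊗1 + 1⊗x, r]` where the r-matrix has
coordinates `ρ`, i.e. `r = ∑ ρ i j • e i ⊗ e j`. -/
def cob (c : Fin 3 → Fin 3 → Fin 3 → ℂ) (ρ : Fin 3 → Fin 3 → ℂ) (x : Fin 3 → ℂ) :
    Fin 3 → Fin 3 → ℂ :=
  fun a b => ∑ i, ∑ j, ρ i j * (bra c x (e i) a * e j b + e i a * bra c x (e j) b)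

/-- The induced bracket on the dual space: `⟨[ξ,η]*, e k⟩ = ⟨ξ ⊗ η, δ(e k)⟩`. -/
def dbra (c : Fin 3 → Fin 3 → Fin 3 → ℂ) (ρ : Fin 3 → Fin 3 → ℂ) (ξ η : Fin 3 → ℂ) :
    Fin 3 → ℂ :=
  fun k => ∑ a, ∑ b, ξ a * η b * cob c ρ (e k) a b

/-- Coordinates of the Schouten bracket
`[r,r]ₛ = [r₁₂,r₁₃] + [r₁₂,r₂₃] + [r₁₃,r₂₃]` in `L⊗L⊗L`. -/
def sch (c : Fin 3 → Fin 3 → Fin 3 → ℂ) (ρ : Fin 3 → Fin 3 → ℂ) :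
    Fin 3 → Fin 3 → Fin 3 → ℂ :=
  fun p q s => ∑ i, ∑ j, ∑ k, ∑ l, ρ i j * ρ k l *
    (c i k p * e j q * e l s + e i p * c j k q * e l s + e i p * e k q * c j l s)

/-- Structure constants of the 3-dimensional algebra (`a = 0` case)
`[e₁,e₂] = b e₃`, `[e₂,e₃] = c e₁`, `[e₁,e₃] = f e₂` (upper-triangular part). -/
def d3 (b cc f : ℂ) : Fin 3 → Fin 3 → Fin 3 → ℂ := fun i j k =>
  if i = 0 ∧ j = 1 then (if k = 2 then b else 0)
  else if i = 1 ∧ j = 2 then (if k = 0 then cc else 0)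
  else if i = 0 ∧ j = 2 then (if k = 1 then f else 0)
  else 0

/-- The antisymmetrized structure constants. -/
def c3 (b cc f : ℂ) : Fin 3 → Fin 3 → Fin 3 → ℂ := fun i j k =>
  d3 b cc f i j k - d3 b cc f j i k

/-- Coordinates of the antisymmetric r-matrix
`r = r¹² e₁∧e₂ + r¹³ e₁∧e₃ + r²³ e₂∧e₃`. -/
def ρ3 (r12 r13 r23 : ℂ) : Fin 3 → Fin 3 → ℂ := fun i j =>
  (if i = 0 ∧ j = 1 then r12 else if i = 0 ∧ j = 2 then r13
    else if i = 1 ∧ j = 2 then r23 else 0)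
  - (if j = 0 ∧ i = 1 then r12 else if j = 0 ∧ i = 2 then r13
    else if j = 1 ∧ i = 2 then r23 else 0)

/-- Coordinates of `e₁∧e₂∧e₃ = ∑_{σ ∈ S₃} sgn(σ) e_{σ(1)} ⊗ e_{σ(2)} ⊗ e_{σ(3)}`. -/
def eps : Fin 3 → Fin 3 → Fin 3 → ℂ := fun p q s =>
  ∑ σ : Equiv.Perm (Fin 3), ((Equiv.Perm.sign σ : ℤ) : ℂ) * e (σ 0) p * e (σ 1) q * e (σ 2) s

lemma eps_eq (p q s : Fin 3) : eps p q s =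
    e 0 p * e 1 q * e 2 s - e 1 p * e 0 q * e 2 s - e 2 p * e 1 q * e 0 s
    - e 0 p * e 2 q * e 1 s + e 1 p * e 2 q * e 0 s + e 2 p * e 0 q * e 1 s := by
  rw [eps, show (Finset.univ : Finset (Equiv.Perm (Fin 3))) =
    {Equiv.refl _, Equiv.swap 0 1, Equiv.swap 0 2, Equiv.swap 1 2,
     Equiv.swap 0 1 * Equiv.swap 1 2, Equiv.swap 0 1 * Equiv.swap 0 2} from by decide]
  simp (config := { decide := true }) [Finset.sum_insert, Finset.mem_insert, Equiv.swap_apply_def]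
  ring

set_option maxHeartbeats 2000000 in
/-- For the algebra `[e₁,e₂] = b e₃`, `[e₂,e₃] = c e₁`, `[e₁,e₃] = f e₂` and
`r = r¹² e₁∧e₂ + r¹³ e₁∧e₃ + r²³ e₂∧e₃`, the Schouten bracket satisfies
`[r,r]ₛ = (b (r¹²)² − f (r¹³)² + c (r²³)²) · e₁∧e₂∧e₃`. -/
theorem schouten_formula (b cc f r12 r13 r23 : ℂ) :
    ∀ p q s : Fin 3, sch (c3 b cc f) (ρ3 r12 r13 r23) p q s
      = (b * r12 ^ 2 - f * r13 ^ 2 + cc * r23 ^ 2) * eps p q s := by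
  intro p q s
  rw [eps_eq]
  fin_cases p <;> fin_cases q <;> fin_cases s <;>
    simp (config := { decide := true }) only [sch, c3, d3, ρ3, e, Fin.sum_univ_three,
      if_true, if_false] <;> ring
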